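/- arXiv:1110.0563 — 6 statements merged into one kernel-verified Lean document; each statement's English description precedes it below -/
import Mathlib

section
/- Let Γ be a finite bipartite graph (possibly with multiple edges) on vertex classes A and B with |A| = |B| = n ≥ 2. If Γ has exactly one perfect matching and no isolated vertices, then Γ has a vertex of degree 1 (a leaf). -/
/-!
Suppose every vertex `a ∈ A` has degree at least `2`, so besides its matching edge `f a` it has a
second edge `g a`. Following `g a` to its endpoint in `B` and then the matching edge back to `A`
defines a map `A → A`; as `A` is finite, this map has periodic points, and it permutes them.
Replacing `f` by `g` on the periodic points produces a second perfect matching, contradicting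
uniqueness.
-/

open Function Set

theorem Function.periodicPts_nonempty {α : Type*} [Finite α] [Nonempty α] (f : α → α) :
    (periodicPts f).Nonempty := by
  obtain ⟨x⟩ := ‹Nonempty α›
  obtain ⟨m, n, hne, heq⟩ := Finite.exists_ne_map_eq_of_infinite (f^[·] x)
  wlog hlt : m < n generalizing m n
  · exact this n m hne.symm heq.symm (by omega)
  refine ⟨f^[m] x, mk_mem_periodicPts (Nat.sub_pos_of_lt hlt) ?_⟩
  rw [IsPeriodicPt, IsFixedPt, ← iterate_add_apply, Nat.sub_add_cancel hlt.le, heq]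

theorem Set.BijOn.bijective_piecewise_id {α : Type*} {h : α → α} {S : Set α}
    [DecidablePred (· ∈ S)] (hS : BijOn h S S) : Bijective (S.piecewise h id) := by
  refine ⟨(injective_piecewise_iff S).mpr ⟨hS.injOn, injOn_id _, ?_⟩, fun b => ?_⟩
  · exact fun x hx y hy hxy => hy ((congrArg (· ∈ S) hxy).mp (hS.mapsTo hx))
  by_cases hb : b ∈ S
  · obtain ⟨a, ha, rfl⟩ := hS.surjOn hb
    exact ⟨a, piecewise_eq_of_mem _ _ _ ha⟩
  · exact ⟨b, piecewise_eq_of_notMem _ _ _ hb⟩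

section Matching

variable {α β E : Type*} {ea : E → α} {eb : E → β}

def IsPerfectMatching (ea : E → α) (eb : E → β) (f : α → E) : Prop :=
  (∀ a, ea (f a) = a) ∧ Bijective (eb ∘ f)

namespace IsPerfectMatching

variable {f : α → E} (hf : IsPerfectMatching ea eb f)

noncomputable def alternatingStep (g : α → E) : α → α :=
  (Equiv.ofBijective _ hf.2).symm ∘ eb ∘ g

theorem eb_alternatingStep (g : α → E) (a : α) : eb (f (hf.alternatingStep g a)) = eb (g a) :=
  (Equiv.ofBijective _ hf.2).apply_symm_apply (eb (g a))

theorem piecewise {g : α → E} (hg : ∀ a, ea (g a) = a) {S : Set α} [DecidablePred (· ∈ S)]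
    (hS : BijOn (hf.alternatingStep g) S S) : IsPerfectMatching ea eb (S.piecewise g f) := by
  have hcomp : eb ∘ S.piecewise g f = (eb ∘ f) ∘ S.piecewise (hf.alternatingStep g) id := by
    funext a
    by_cases ha : a ∈ S
    · simp [piecewise_eq_of_mem _ _ _ ha, hf.eb_alternatingStep]
    · simp [piecewise_eq_of_notMem _ _ _ ha]
  refine ⟨fun a => ?_, hcomp ▸ hf.2.comp hS.bijective_piecewise_id⟩
  by_cases ha : a ∈ S
  · rw [piecewise_eq_of_mem _ _ _ ha, hg]
  · rw [piecewise_eq_of_notMem _ _ _ ha, hf.1]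

end IsPerfectMatching

theorem IsPerfectMatching.not_unique [Finite α] [Nonempty α] {f g : α → E}
    (hf : IsPerfectMatching ea eb f) (hg : ∀ a, ea (g a) = a) (hgf : ∀ a, g a ≠ f a) :
    ¬ ∀ f', IsPerfectMatching ea eb f' → f' = f := by
  classical
  intro huniq
  let S := periodicPts (hf.alternatingStep g)
  obtain ⟨c, hc⟩ := periodicPts_nonempty (hf.alternatingStep g)
  have hcycle : S.piecewise g f = f := huniq _ (hf.piecewise hg (bijOn_periodicPts _))
  exact hgf c (by rw [← hcycle, piecewise_eq_of_mem _ _ _ hc])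

end Matching

theorem stmt_8_general {n : ℕ} (hn : 2 ≤ n) (E : Type) [Fintype E]
    (ea eb : E → Fin n)
    (hpm : ∃! f : Fin n → E, (∀ a, ea (f a) = a) ∧ Function.Bijective (eb ∘ f)) :
    (∃ a, (Finset.univ.filter fun e => ea e = a).card = 1) ∨
    (∃ b, (Finset.univ.filter fun e => eb e = b).card = 1) := by
  left
  by_contra! hdeg
  obtain ⟨f, hf, huniq⟩ := hpm
  have halt : ∀ a, ∃ e, ea e = a ∧ e ≠ f a := by
    intro a
    have hfa : f a ∈ Finset.univ.filter fun e => ea e = a := by simp [hf.1]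
    have hpos := Finset.card_pos.mpr ⟨_, hfa⟩
    obtain ⟨e, he, hne⟩ := Finset.exists_mem_ne (lt_of_le_of_ne hpos (hdeg a).symm) (f a)
    exact ⟨e, (Finset.mem_filter.mp he).2, hne⟩
  choose g hg hgf using halt
  have : NeZero n := ⟨by omega⟩
  exact IsPerfectMatching.not_unique hf hg hgf huniq

/-- A finite bipartite multigraph on classes of size n ≥ 2 with a unique perfect
matching and no isolated vertices has a vertex of degree 1. Edges are given by a
finite type `E` with endpoint maps `ea : E → Fin n` (to class A) and
`eb : E → Fin n` (to class B); a perfect matching assigns to each vertex of A an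
incident edge such that the B-endpoints form a bijection. -/
theorem stmt_8 {n : ℕ} (hn : 2 ≤ n) (E : Type) [Fintype E] [DecidableEq E]
    (ea eb : E → Fin n)
    (hpm : ∃! f : Fin n → E, (∀ a, ea (f a) = a) ∧ Function.Bijective (eb ∘ f))
    (hisoA : ∀ a, ∃ e, ea e = a) (hisoB : ∀ b, ∃ e, eb e = b) :
    (∃ a, (Finset.univ.filter fun e => ea e = a).card = 1) ∨
    (∃ b, (Finset.univ.filter fun e => eb e = b).card = 1) :=
  stmt_8_general hn E ea eb hpm
end

section
/- Let Γ be a finite bipartite graph on classes A and B with |A| = |B| = n ≥ 1 admitting a perfect matching μ. If every vertex of Γ has degree at least 2, then Γ admits a second perfect matching distinct from μ. (Proof idea: orient matched edges from A to B and unmatched edges from B to A; every vertex lies on a walk leading to a directed cycle, and swapping the matching along that cycle yields a new perfect matching.) -/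
/-!
Send each `a ∈ A` to a second neighbour `g a ≠ μ a` and follow it back along the matching:
`f = μ⁻¹ ∘ g` is a self-map of the finite set `A`, so it has periodic points, and `f` permutes
them. Rematching every periodic point `a` to `g a` (i.e. switching `μ` along the cycles of `f`)
and keeping `μ` elsewhere is again a perfect matching, and it differs from `μ`.
-/

open Function

namespace Function

variable {α : Type*}

theorem nonempty_periodicPts [Finite α] [Nonempty α] (f : α → α) :
    (periodicPts f).Nonempty := by
  obtain ⟨x⟩ := ‹Nonempty α›
  obtain ⟨m, n, heq, hne⟩ : ∃ m n, f^[m] x = f^[n] x ∧ m ≠ n := by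
    simpa [Injective] using not_injective_infinite_finite (f^[·] x)
  wlog hlt : m < n generalizing m n
  · exact this n m heq.symm hne.symm (by omega)
  refine ⟨f^[m] x, mk_mem_periodicPts (n := n - m) (by omega) ?_⟩
  rw [IsPeriodicPt, IsFixedPt, ← iterate_add_apply, Nat.sub_add_cancel hlt.le, heq]

open Classical in
theorem exists_perm_eqOn_periodicPts (f : α → α) :
    ∃ σ : Equiv.Perm α, (∀ x ∈ periodicPts f, σ x = f x) ∧ ∀ x ∉ periodicPts f, σ x = x :=
  ⟨Equiv.Perm.ofSubtype ((bijOn_periodicPts f).equiv f),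
    fun _ hx => Equiv.Perm.ofSubtype_apply_of_mem _ hx,
    fun _ hx => Equiv.Perm.ofSubtype_apply_of_not_mem _ hx⟩

end Function

theorem Equiv.exists_ne_forall_eq_or_eq {α β : Type*} [Finite α] [Nonempty α] (μ : α ≃ β)
    (g : α → β) (hg : ∀ a, g a ≠ μ a) : ∃ ν : α ≃ β, ν ≠ μ ∧ ∀ a, ν a = μ a ∨ ν a = g a := by
  set f : α → α := μ.symm ∘ g
  obtain ⟨σ, hσ_per, hσ_nper⟩ := exists_perm_eqOn_periodicPts f
  obtain ⟨a, ha⟩ := nonempty_periodicPts f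
  have hν_per : ∀ x ∈ periodicPts f, (σ.trans μ) x = g x := fun x hx => by
    simp [hσ_per x hx, f]
  refine ⟨σ.trans μ, fun h => hg a ?_, fun x => ?_⟩
  · rw [← hν_per a ha, h]
  · by_cases hx : x ∈ periodicPts f
    · exact .inr (hν_per x hx)
    · exact .inl (by simp [hσ_nper x hx])

theorem stmt_9_general {n : ℕ} (hn : 1 ≤ n) (Adj : Fin n → Fin n → Prop)
    [∀ a b, Decidable (Adj a b)]
    (μ : Fin n ≃ Fin n) (hμ : ∀ a, Adj a (μ a))
    (hdegA : ∀ a, 2 ≤ (Finset.univ.filter fun b => Adj a b).card) :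
    ∃ ν : Fin n ≃ Fin n, ν ≠ μ ∧ ∀ a, Adj a (ν a) := by
  have : Nonempty (Fin n) := ⟨⟨0, hn⟩⟩
  have hsecond : ∀ a, ∃ b, Adj a b ∧ b ≠ μ a := fun a => by
    obtain ⟨b, hb, hne⟩ := Finset.exists_mem_ne (hdegA a) (μ a)
    exact ⟨b, (Finset.mem_filter.mp hb).2, hne⟩
  choose g hg_adj hg_ne using hsecond
  obtain ⟨ν, hν_ne, hν⟩ := μ.exists_ne_forall_eq_or_eq g hg_ne
  refine ⟨ν, hν_ne, fun a => ?_⟩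
  rcases hν a with h | h <;> rw [h]
  exacts [hμ a, hg_adj a]

/-- A finite bipartite graph on classes of size n ≥ 1 admitting a perfect
matching, all of whose vertices have degree at least 2, admits a second perfect
matching. Adjacency between class A and class B is `Adj : Fin n → Fin n → Prop`,
and a perfect matching is a bijection A → B all of whose pairs are edges. -/
theorem stmt_9 {n : ℕ} (hn : 1 ≤ n) (Adj : Fin n → Fin n → Prop)
    [∀ a b, Decidable (Adj a b)]
    (μ : Fin n ≃ Fin n) (hμ : ∀ a, Adj a (μ a))
    (hdegA : ∀ a, 2 ≤ (Finset.univ.filter fun b => Adj a b).card)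
    (hdegB : ∀ b, 2 ≤ (Finset.univ.filter fun a => Adj a b).card) :
    ∃ ν : Fin n ≃ Fin n, ν ≠ μ ∧ ∀ a, Adj a (ν a) :=
  stmt_9_general hn Adj μ hμ hdegA
end

section
/- Let M be an n × n matrix with entries in {−1, 0, +1}. If M(i,i) ≠ 0 for all i, and for every j there exists i ≠ j with M(i,j) ≠ 0 and M(i,j) ≠ M(j,j), then there exists a permutation σ ≠ id with M(i, σ(i)) ≠ 0 for all i and sign(σ) · ∏ᵢ M(i, σ(i)) = −∏ᵢ M(i,i). -/
/-- If an n × n matrix with entries in {-1,0,1} has all diagonal entries nonzero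
and every column contains a nonzero off-diagonal entry different from the
diagonal entry of that column, then there is a nonidentity permutation whose
determinant-expansion term has sign opposite to the diagonal term. -/
theorem stmt_11 {n : ℕ} (hn : 1 ≤ n) (M : Matrix (Fin n) (Fin n) ℤ)
    (hentries : ∀ i j, M i j = -1 ∨ M i j = 0 ∨ M i j = 1)
    (hdiag : ∀ i, M i i ≠ 0)
    (hcol : ∀ j, ∃ i, i ≠ j ∧ M i j ≠ 0 ∧ M i j ≠ M j j) :
    ∃ σ : Equiv.Perm (Fin n), σ ≠ 1 ∧ (∀ i, M i (σ i) ≠ 0) ∧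
      (Equiv.Perm.sign σ : ℤ) * ∏ i, M i (σ i) = -∏ i, M i i := by
  choose f hfne hf0 hfd using hcol
  have hfneg : ∀ j, M (f j) j = - M j j := by
    intro j
    have h0 := hf0 j; have hd := hfd j
    rcases hentries (f j) j with h | h | h <;> rcases hentries j j with h' | h' | h' <;>
      simp_all
  obtain ⟨a, b, hlt, heq⟩ : ∃ a b : ℕ, a < b ∧ f^[a] ⟨0, hn⟩ = f^[b] ⟨0, hn⟩ := by
    obtain ⟨a, b, hab, heq⟩ := Finite.exists_ne_map_eq_of_infinite
      (fun k : ℕ => f^[k] ⟨0, hn⟩)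
    rcases hab.lt_or_gt with h | h
    · exact ⟨a, b, h, heq⟩
    · exact ⟨b, a, h, heq.symm⟩
  have hper0 : f^[b - a] (f^[a] ⟨0, hn⟩) = f^[a] ⟨0, hn⟩ := by
    rw [← Function.iterate_add_apply, Nat.sub_add_cancel hlt.le, ← heq]
  set j : Fin n := f^[a] ⟨0, hn⟩ with hj
  have hper : Function.IsPeriodicPt f (b - a) j := hper0
  have hmempp : j ∈ Function.periodicPts f :=
    Function.mk_mem_periodicPts (by omega) hper
  set m := Function.minimalPeriod f j with hm
  have hmpos : 0 < m := Function.minimalPeriod_pos_of_mem_periodicPts hmempp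
  have hm2 : 2 ≤ m := by
    by_contra hcon
    have hm1 : m = 1 := by omega
    refine hfne j ?_
    have h1 := Function.iterate_minimalPeriod (f := f) (x := j)
    rw [← hm, hm1, Function.iterate_one] at h1
    exact h1
  set l : List (Fin n) := (List.range m).map (fun t => f^[t] j) with hl
  have hlen : l.length = m := by simp [hl]
  have hnodup : l.Nodup := by
    refine List.Nodup.map_on ?_ List.nodup_range
    intro x hx y hy hxy
    exact Function.iterate_injOn_Iio_minimalPeriod
      (by simpa using List.mem_range.mp hx) (by simpa using List.mem_range.mp hy) hxy
  have e1 : ∀ t (ht : t < l.length), l[t] = f^[t] j := by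
    intro t ht; simp [hl]
  have hfp : ∀ x ∈ l, l.formPerm x = f x := by
    intro x hx
    obtain ⟨i, hi, rfl⟩ := List.getElem_of_mem hx
    rw [List.formPerm_apply_getElem _ hnodup i hi]
    rw [e1, e1 i hi]
    rw [hlen, Function.iterate_mod_minimalPeriod_eq]
    exact Function.iterate_succ_apply' f i j
  set g : Equiv.Perm (Fin n) := l.formPerm with hg
  have hgc : g.IsCycle := List.isCycle_formPerm hnodup (by omega)
  have hgsupp : g.support = l.toFinset := by
    refine List.support_formPerm_of_nodup l hnodup ?_
    intro x hx
    have := hlen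
    rw [hx] at this
    simp at this; omega
  have hkey : ∀ i : Fin n, g⁻¹ i ≠ i → M i (g⁻¹ i) = - M (g⁻¹ i) (g⁻¹ i) := by
    intro i hi
    have hmem : g⁻¹ i ∈ g.support := by
      rw [Equiv.Perm.mem_support]
      intro h
      exact hi (by rw [← h]; simp)
    have hml : g⁻¹ i ∈ l := by rwa [hgsupp, List.mem_toFinset] at hmem
    have h2 : i = f (g⁻¹ i) := by
      have := hfp _ hml
      rw [show g (g⁻¹ i) = i from by simp] at this
      exact this
    nth_rewrite 1 [h2]
    exact hfneg _
  refine ⟨g⁻¹, hgc.inv.ne_one, ?_, ?_⟩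
  · intro i
    by_cases hi : g⁻¹ i = i
    · rw [hi]; exact hdiag i
    · rw [hkey i hi]
      simpa using hdiag (g⁻¹ i)
  · set σ := g⁻¹ with hσ
    have hσc : σ.IsCycle := hgc.inv
    set S := σ.support with hS
    have hsub : {a | σ a ≠ a} ⊆ ↑S := by
      intro x hx; simpa [hS] using hx
    have hprod : ∏ i, M i (σ i) = ((-1) ^ S.card * ∏ i ∈ S, M i i) * ∏ i ∈ Sᶜ, M i i := by
      rw [← Finset.prod_mul_prod_compl S]
      congr 1
      · calc ∏ i ∈ S, M i (σ i) = ∏ i ∈ S, -M (σ i) (σ i) := by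
              refine Finset.prod_congr rfl fun i hi => ?_
              exact hkey i (Equiv.Perm.mem_support.mp hi)
          _ = (-1) ^ S.card * ∏ i ∈ S, M (σ i) (σ i) := by
              rw [show (∏ i ∈ S, -M (σ i) (σ i)) = ∏ i ∈ S, (-1) * M (σ i) (σ i) from
                Finset.prod_congr rfl fun i _ => (neg_one_mul _).symm,
                Finset.prod_mul_distrib, Finset.prod_const]
          _ = (-1) ^ S.card * ∏ i ∈ S, M i i := by
              rw [Equiv.Perm.prod_comp σ S (fun x => M x x) hsub]
      · refine Finset.prod_congr rfl fun i hi => ?_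
        have : σ i = i := by
          by_contra h
          exact (Finset.mem_compl.mp hi) (Equiv.Perm.mem_support.mpr h)
        rw [this]
    have hsign : (Equiv.Perm.sign σ : ℤ) = -(-1) ^ S.card := by
      rw [hσc.sign]
      push_cast
      ring
    rw [hprod, hsign, ← Finset.prod_mul_prod_compl S (fun i => M i i)]
    have hh : ((-1 : ℤ)) ^ S.card * (-1) ^ S.card = 1 := by
      rw [← pow_add]; exact Even.neg_one_pow ⟨S.card, rfl⟩
    linear_combination (-(∏ i ∈ S, M i i) * ∏ i ∈ Sᶜ, M i i) * hh
end

section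
/- Let A be an n × n real matrix with det A ≠ 0 and |det A| equal to the permanent of (|A(i,j)|). Then for every choice of d₁, …, dₙ ∈ {−1, 0, +1}, not all zero, the matrix M with M(i,j) = dᵢ · A(i,j) has a nonzero column all of whose nonzero entries have the same sign (all positive or all negative). -/
/-!
The hypothesis `|det A| = per |A|` says that every nonzero term `sign σ * ∏ i, A i (σ i)` of the
determinant expansion has the sign of `det A`. Multiplying the entries of `A` by positive weights
preserves the sign of every term, so all such matrices `A ⊙ W` stay nonsingular.
If every nonzero column of `M = (d i * A i j)` contained entries of both signs, positive weights
could balance each column to sum zero, giving `d ᵥ* (A ⊙ W) = 0` with `d ≠ 0`, a contradiction.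
-/

open Finset Equiv Matrix

theorem Finset.mul_nonneg_of_abs_sum_eq_sum_abs {ι R : Type*} [CommRing R] [LinearOrder R]
    [IsStrictOrderedRing R] {s : Finset ι} {f : ι → R}
    (h : |∑ j ∈ s, f j| = ∑ j ∈ s, |f j|) {i : ι} (hi : i ∈ s) :
    0 ≤ (∑ j ∈ s, f j) * f i := by
  set S := ∑ j ∈ s, f j
  -- `∑ j, (|S| |f j| - S f j) = |S|² - S² = 0` is a sum of nonnegative terms.
  have hsum : ∑ j ∈ s, (|S| * |f j| - S * f j) = 0 := by
    rw [sum_sub_distrib, ← mul_sum, ← mul_sum, ← h, abs_mul_abs_self, sub_self]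
  have hterm := (sum_eq_zero_iff_of_nonneg fun j _ =>
    sub_nonneg.2 ((abs_mul S (f j)).symm ▸ le_abs_self (S * f j))).1 hsum i hi
  rw [sub_eq_zero] at hterm
  exact hterm ▸ by positivity

theorem exists_pos_weights_sum_mul_eq_zero {ι K : Type*} [Fintype ι] [Field K] [LinearOrder K]
    [IsStrictOrderedRing K] {v : ι → K}
    (h : ¬((∃ i, v i ≠ 0) ∧ ((∀ i, 0 ≤ v i) ∨ ∀ i, v i ≤ 0))) :
    ∃ w : ι → K, (∀ i, 0 < w i) ∧ ∑ i, w i * v i = 0 := by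
  by_cases hv : ∀ i, v i = 0
  · exact ⟨1, fun _ => one_pos, by simp [hv]⟩
  push Not at hv h
  obtain ⟨⟨ineg, hineg⟩, ⟨ipos, hipos⟩⟩ := h hv
  set P := ∑ i, (v i)⁺
  set N := ∑ i, (v i)⁻
  have hP : 0 < P := sum_pos' (fun i _ => posPart_nonneg _) ⟨ipos, mem_univ _, posPart_pos hipos⟩
  have hN : 0 < N := sum_pos' (fun i _ => negPart_nonneg _) ⟨ineg, mem_univ _, negPart_pos hineg⟩
  have hterm : ∀ i, (if 0 < v i then N else P) * v i = N * (v i)⁺ - P * (v i)⁻ := by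
    intro i
    split_ifs with hi
    · simp [posPart_eq_self.2 hi.le, negPart_eq_zero.2 hi.le]
    · push Not at hi
      simp [posPart_eq_zero.2 hi, negPart_eq_neg.2 hi]
  refine ⟨fun i => if 0 < v i then N else P, fun i => by beta_reduce; split_ifs <;> assumption, ?_⟩
  simp only [hterm, sum_sub_distrib, ← mul_sum]
  ring

namespace Matrix

variable {n R : Type*} [Fintype n] [DecidableEq n]

theorem det_eq_sum_sign_mul_prod [CommRing R] (M : Matrix n n R) :
    M.det = ∑ σ : Perm n, (Perm.sign σ : R) * ∏ i, M i (σ i) :=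
  (det_transpose M).symm.trans (det_apply' _)

theorem det_hadamard_ne_zero_of_abs_det_eq_sum_prod_abs [CommRing R] [LinearOrder R]
    [IsStrictOrderedRing R] {A W : Matrix n n R}
    (hdet : A.det ≠ 0) (hper : |A.det| = ∑ σ : Perm n, ∏ i, |A i (σ i)|)
    (hW : ∀ i j, 0 < W i j) : (A ⊙ W).det ≠ 0 := by
  set t : Perm n → R := fun σ => (Perm.sign σ : R) * ∏ i, A i (σ i)
  have hA : A.det = ∑ σ, t σ := det_eq_sum_sign_mul_prod A
  have hsame : ∀ σ, 0 ≤ A.det * t σ := fun σ => hA ▸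
    mul_nonneg_of_abs_sum_eq_sum_abs
      (by simp [← hA, hper, t, abs_mul, abs_prod, ← Int.cast_abs]) (mem_univ σ)
  obtain ⟨σ₀, -, hσ₀⟩ := exists_ne_zero_of_sum_ne_zero (hA ▸ hdet)
  have hAW : (A ⊙ W).det = ∑ σ, t σ * ∏ i, W i (σ i) := by
    simp [det_eq_sum_sign_mul_prod, t, hadamard_apply, prod_mul_distrib, mul_assoc]
  have hpos : 0 < A.det * (A ⊙ W).det := by
    rw [hAW, mul_sum]
    refine sum_pos' (fun σ _ => ?_) ⟨σ₀, mem_univ _, ?_⟩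
    · rw [← mul_assoc]
      exact mul_nonneg (hsame σ) (prod_pos fun i _ => hW _ _).le
    · rw [← mul_assoc]
      exact mul_pos ((hsame σ₀).lt_of_ne' (mul_ne_zero hdet hσ₀)) (prod_pos fun i _ => hW _ _)
  exact right_ne_zero_of_mul hpos.ne'

end Matrix

theorem stmt_12_general {n : ℕ} (A : Matrix (Fin n) (Fin n) ℝ)
    (hdet : A.det ≠ 0)
    (hper : |A.det| = ∑ σ : Equiv.Perm (Fin n), ∏ i, |A i (σ i)|)
    (d : Fin n → ℝ)
    (hd0 : ∃ i, d i ≠ 0) :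
    ∃ j, (∃ i, d i * A i j ≠ 0) ∧
      ((∀ i, 0 ≤ d i * A i j) ∨ (∀ i, d i * A i j ≤ 0)) := by
  by_contra hcon
  choose W hWpos hW using fun j =>
    exists_pos_weights_sum_mul_eq_zero (v := fun i => d i * A i j) (not_exists.mp hcon j)
  refine det_hadamard_ne_zero_of_abs_det_eq_sum_prod_abs hdet hper (W := of fun i j => W j i)
    (fun i j => hWpos j i) (exists_vecMul_eq_zero_iff.mp ⟨d, ?_, ?_⟩)
  · obtain ⟨i, hi⟩ := hd0
    exact fun h => hi (congrFun h i)
  · funext j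
    simp only [vecMul, dotProduct, hadamard_apply, of_apply, Pi.zero_apply, ← hW j]
    exact sum_congr rfl fun i _ => by ring

/-- If a real matrix has nonzero determinant whose absolute value equals the
permanent of the matrix of absolute values, then for any signs d i ∈ {-1,0,1},
not all zero, the matrix (d i * A i j) has a nonzero column all of whose nonzero
entries have the same sign. -/
theorem stmt_12 {n : ℕ} (A : Matrix (Fin n) (Fin n) ℝ)
    (hdet : A.det ≠ 0)
    (hper : |A.det| = ∑ σ : Equiv.Perm (Fin n), ∏ i, |A i (σ i)|)
    (d : Fin n → ℝ) (hd : ∀ i, d i = -1 ∨ d i = 0 ∨ d i = 1)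
    (hd0 : ∃ i, d i ≠ 0) :
    ∃ j, (∃ i, d i * A i j ≠ 0) ∧
      ((∀ i, 0 ≤ d i * A i j) ∨ (∀ i, d i * A i j ≤ 0)) :=
  stmt_12_general A hdet hper d hd0
end

section
/- Let G be a nontrivial group generated by x₁, …, xₙ, and suppose there are relators r₁, …, rₙ (words equal to 1 in G) such that: for every assignment of signs d₁, …, dₙ ∈ {−1, 0, +1}, not all zero, some relator rⱼ, when each occurrence of xᵢ^{±1} is replaced by the sign ±dᵢ, becomes a word whose letter-signs are all ≥ 0 with at least one > 0, or all ≤ 0 with at least one < 0. Then G is not left-orderable. -/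
/-!
In a left-ordered group a product of elements `≥ 1`, one of which is `> 1`, is `> 1`, and dually.
Let `dᵢ` be the sign of `xᵢ` relative to `1`; then the letter `xᵢ^{±1}` has sign `±dᵢ`. Since `G` is
nontrivial and generated by the `xᵢ`, some `dᵢ ≠ 0`, so the hypothesis yields a relator whose value
is `> 1` or `< 1`, contradicting `rⱼ = 1`.
-/

namespace List

variable {M : Type*} [Monoid M] [Preorder M] [MulLeftMono M] [MulLeftStrictMono M]

theorem one_lt_prod_of_one_le_of_exists_one_lt {l : List M} (hle : ∀ a ∈ l, 1 ≤ a)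
    (hlt : ∃ a ∈ l, 1 < a) : 1 < l.prod := by
  induction l with
  | nil => simp at hlt
  | cons a l ih =>
    simp only [forall_mem_cons] at hle
    simp only [mem_cons, exists_eq_or_imp] at hlt
    rw [prod_cons]
    obtain ha | hl := hlt
    · exact ha.trans_le (le_mul_of_one_le_right' (one_le_prod_of_one_le hle.2))
    · exact hle.1.trans_lt (lt_mul_of_one_lt_right' a (ih hle.2 hl))

theorem prod_lt_one_of_le_one_of_exists_lt_one {l : List M} (hle : ∀ a ∈ l, a ≤ 1)
    (hlt : ∃ a ∈ l, a < 1) : l.prod < 1 :=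
  one_lt_prod_of_one_le_of_exists_one_lt (M := Mᵒᵈ) hle hlt

end List

section MulSign

variable {α : Type*} [One α] [LinearOrder α] {a : α}

def mulSign (a : α) : ℤ := if 1 < a then 1 else if a < 1 then -1 else 0

theorem mulSign_mem (a : α) : mulSign a = -1 ∨ mulSign a = 0 ∨ mulSign a = 1 := by
  unfold mulSign; split_ifs <;> simp

theorem mulSign_pos_iff : 0 < mulSign a ↔ 1 < a := by
  unfold mulSign; split_ifs <;> simp_all

theorem mulSign_neg_iff : mulSign a < 0 ↔ a < 1 := by
  unfold mulSign; split_ifs <;> simp_all [le_of_lt]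

theorem mulSign_nonneg_iff : 0 ≤ mulSign a ↔ 1 ≤ a := by
  rw [← not_lt, mulSign_neg_iff, not_lt]

theorem mulSign_nonpos_iff : mulSign a ≤ 0 ↔ a ≤ 1 := by
  rw [← not_lt, mulSign_pos_iff, not_lt]

theorem mulSign_eq_zero_iff : mulSign a = 0 ↔ a = 1 := by
  rw [le_antisymm_iff, mulSign_nonpos_iff, mulSign_nonneg_iff, le_antisymm_iff]

theorem mulSign_inv {G : Type*} [Group G] [LinearOrder G] [MulLeftStrictMono G] (g : G) :
    mulSign g⁻¹ = -mulSign g := by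
  unfold mulSign
  simp only [Left.one_lt_inv_iff, Left.inv_lt_one_iff]
  split_ifs <;> first | order | norm_num

end MulSign

section LeftOrderedGroup

variable {G : Type*} [Group G] [LinearOrder G] [MulLeftStrictMono G]

theorem ite_mulSign_eq_mulSign_ite (g : G) (b : Bool) :
    (if b then mulSign g else -mulSign g) = mulSign (if b then g else g⁻¹) := by
  cases b <;> simp [mulSign_inv]

variable [MulLeftMono G] {ι : Type*} {f : ι → G} {l : List ι}

theorem one_lt_prod_map_of_mulSign (hle : ∀ i ∈ l, 0 ≤ mulSign (f i))
    (hlt : ∃ i ∈ l, 0 < mulSign (f i)) : 1 < (l.map f).prod := by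
  simp only [mulSign_nonneg_iff, mulSign_pos_iff] at hle hlt
  exact List.one_lt_prod_of_one_le_of_exists_one_lt (by simpa using hle) (by simpa using hlt)

theorem prod_map_lt_one_of_mulSign (hle : ∀ i ∈ l, mulSign (f i) ≤ 0)
    (hlt : ∃ i ∈ l, mulSign (f i) < 0) : (l.map f).prod < 1 := by
  simp only [mulSign_nonpos_iff, mulSign_neg_iff] at hle hlt
  exact List.prod_lt_one_of_le_one_of_exists_lt_one (by simpa using hle) (by simpa using hlt)

end LeftOrderedGroup

theorem Subgroup.exists_ne_one_of_closure_range_eq_top {G ι : Type*} [Group G] [Nontrivial G]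
    {x : ι → G} (h : Subgroup.closure (Set.range x) = ⊤) : ∃ i, x i ≠ 1 := by
  by_contra! h₁
  exact top_ne_bot (h ▸ closure_eq_bot_iff.mpr (Set.range_subset_iff.mpr h₁))

/-- Suppose a nontrivial group G is generated by x₁,…,xₙ with relators
r₁,…,rₙ (words in the generators, encoded as lists of pairs (index, Bool) where
the Bool records the exponent sign) each equal to 1 in G. If for every
assignment of signs dᵢ ∈ {-1,0,1}, not all zero, some relator becomes a word
whose letter-signs are all ≥ 0 with at least one > 0, or all ≤ 0 with at least
one < 0, then G is not left-orderable. -/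
theorem stmt_13 {G : Type*} [Group G] [Nontrivial G] {n : ℕ}
    (x : Fin n → G) (hgen : Subgroup.closure (Set.range x) = ⊤)
    (r : Fin n → List (Fin n × Bool))
    (hrel : ∀ j, ((r j).map fun p => if p.2 then x p.1 else (x p.1)⁻¹).prod = 1)
    (hobst : ∀ d : Fin n → ℤ, (∀ i, d i = -1 ∨ d i = 0 ∨ d i = 1) →
      (∃ i, d i ≠ 0) →
      ∃ j, ((∀ p ∈ r j, 0 ≤ (if p.2 then d p.1 else -d p.1)) ∧
              (∃ p ∈ r j, 0 < (if p.2 then d p.1 else -d p.1))) ∨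
           ((∀ p ∈ r j, (if p.2 then d p.1 else -d p.1) ≤ 0) ∧
              (∃ p ∈ r j, (if p.2 then d p.1 else -d p.1) < 0))) :
    ¬ ∃ lt : G → G → Prop, IsStrictTotalOrder G lt ∧
        ∀ k g h : G, lt g h → lt (k * g) (k * h) := by
  rintro ⟨lt, hlt, hmono⟩
  classical
  let : LinearOrder G := linearOrderOfSTO lt
  have : MulLeftStrictMono G := ⟨fun k _ _ h => hmono k _ _ h⟩
  have := mulLeftMono_of_mulLeftStrictMono G
  obtain ⟨i, hi⟩ := Subgroup.exists_ne_one_of_closure_range_eq_top hgen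
  obtain ⟨j, hpos | hneg⟩ := hobst (fun i => mulSign (x i)) (fun i => mulSign_mem _)
    ⟨i, mulSign_eq_zero_iff.not.mpr hi⟩
  · simp only [ite_mulSign_eq_mulSign_ite] at hpos
    exact (one_lt_prod_map_of_mulSign hpos.1 hpos.2).ne' (hrel j)
  · simp only [ite_mulSign_eq_mulSign_ite] at hneg
    exact (prod_map_lt_one_of_mulSign hneg.1 hneg.2).ne (hrel j)
end

section
/- Let G be a finite bipartite graph on vertex classes A, B with |A| = |B| = n, suppose G has a unique perfect matching μ, and orient each edge of μ from A to B and each non-matching edge from B to A. Then the resulting directed graph contains no directed cycle. -/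
/-- The orientation associated to a perfect matching μ of a bipartite graph:
matched edges point from A (left) to B (right), unmatched edges from B to A. -/
def matchingOrientation {n : ℕ} (Adj : Fin n → Fin n → Prop) (μ : Fin n ≃ Fin n) :
    (Fin n ⊕ Fin n) → (Fin n ⊕ Fin n) → Prop
  | Sum.inl a, Sum.inr b => Adj a b ∧ b = μ a
  | Sum.inr b, Sum.inl a => Adj a b ∧ b ≠ μ a
  | _, _ => False

/-! A directed cycle of the orientation alternates between `A` and `B`, so its vertices in `A`
form a cycle `a₀ → a₁ → ⋯ → a₀` in which `aᵢ₊₁ ≠ aᵢ` is adjacent to `μ aᵢ`. A shortest such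
cycle has no repeated vertex, hence is a nontrivial cyclic permutation `σ` of `A`, and
`μ ∘ σ⁻¹` is then a second perfect matching. -/

open Relation

section ClosedWalk

variable {α : Type*} {r : α → α → Prop}

theorem Relation.transGen_iff_exists_walk {a b : α} :
    TransGen r a b ↔ ∃ (k : ℕ) (v : ℕ → α), 0 < k ∧ v 0 = a ∧ v k = b ∧
      ∀ i < k, r (v i) (v (i + 1)) := by
  constructor
  · intro h
    induction h using TransGen.head_induction_on with
    | @single a hab => exact ⟨1, fun i => if i = 0 then a else b, one_pos, rfl, rfl, by simpa⟩
    | @head a c hac _ ih =>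
      obtain ⟨k, v, -, hv0, hvk, hv⟩ := ih
      refine ⟨k + 1, fun | 0 => a | i + 1 => v i, k.succ_pos, rfl, hvk, ?_⟩
      rintro (_ | i) hi
      · simpa [hv0] using hac
      · exact hv i (by omega)
  · rintro ⟨k, v, hk, rfl, rfl, hv⟩
    induction k with
    | zero => omega
    | succ k ih =>
      rcases k.eq_zero_or_pos with rfl | hk
      · exact .single (hv 0 one_pos)
      · exact (ih hk fun i hi => hv i (by omega)).tail (hv k k.lt_succ_self)

theorem exists_closed_walk_injOn {k : ℕ} {v : ℕ → α} (hk : 0 < k) (hvk : v k = v 0)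
    (hv : ∀ i < k, r (v i) (v (i + 1))) :
    ∃ (m : ℕ) (w : ℕ → α), 0 < m ∧ w m = w 0 ∧ (∀ i < m, r (w i) (w (i + 1))) ∧
      Set.InjOn w (Set.Iio m) := by
  induction k using Nat.strong_induction_on generalizing v with
  | _ k ih =>
  by_cases hinj : Set.InjOn v (Set.Iio k)
  · exact ⟨k, v, hk, hvk, hv, hinj⟩
  obtain ⟨i, hi, j, hj, hij, hne⟩ : ∃ i < k, ∃ j < k, v i = v j ∧ i ≠ j := by
    simpa [Set.InjOn] using hinj
  wlog hlt : i < j generalizing i j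
  · exact this j hj i hi hij.symm hne.symm (by omega)
  exact ih (j - i) (by omega) (v := fun t => v (i + t)) (by omega)
    (by simp [Nat.add_sub_cancel' hlt.le, hij]) fun t ht => hv (i + t) (by omega)

theorem exists_perm_of_closed_walk_injOn [DecidableEq α] {k : ℕ} {v : ℕ → α}
    (hvk : v k = v 0) (hinj : Set.InjOn v (Set.Iio k)) :
    ∃ σ : Equiv.Perm α, (∀ i < k, σ (v i) = v (i + 1)) ∧ ∀ x ∉ v '' Set.Iio k, σ x = x := by
  set l := (List.range k).map v
  have hl : l.Nodup := List.nodup_range.map_on fun i hi j hj h =>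
    hinj (by simpa using hi) (by simpa using hj) h
  refine ⟨l.formPerm, fun i hi => ?_, fun x hx => List.formPerm_apply_of_notMem ?_⟩
  · have := List.formPerm_apply_getElem l hl i (by simpa [l] using hi)
    simp only [l, List.getElem_map, List.getElem_range, List.length_map, List.length_range] at this
    rw [this]
    rcases (Nat.succ_le_of_lt hi).lt_or_eq with h | h
    · rw [Nat.mod_eq_of_lt h]
    · obtain rfl := h
      simp [hvk]
  · simpa [l] using hx

theorem exists_perm_ne_one_of_transGen [Std.Irrefl r] {a : α} (h : TransGen r a a) :
    ∃ σ : Equiv.Perm α, σ ≠ 1 ∧ ∀ x, σ x = x ∨ r x (σ x) := by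
  classical
  obtain ⟨k, v, hk, rfl, hvk, hv⟩ := transGen_iff_exists_walk.1 h
  obtain ⟨m, w, hm, hwm, hw, hinj⟩ := exists_closed_walk_injOn hk hvk hv
  obtain ⟨σ, hσw, hσ⟩ := exists_perm_of_closed_walk_injOn hwm hinj
  refine ⟨σ, fun h1 => irrefl_of r (w 0) ?_, fun x => ?_⟩
  · simpa [← hσw 0 hm, h1] using hw 0 hm
  · by_cases hx : x ∈ w '' Set.Iio m
    · obtain ⟨i, hi, rfl⟩ := hx
      exact .inr (hσw i hi ▸ hw i hi)
    · exact .inl (hσ x hx)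

theorem Relation.TransGen.exists_rel_and_transGen_self {a : α} (h : TransGen r a a) :
    ∃ b, r a b ∧ TransGen r b b :=
  (TransGen.head'_iff.1 h).imp fun _ hb => ⟨hb.1, .tail' hb.2 hb.1⟩

end ClosedWalk

section UniqueMatching

variable {n : ℕ} {Adj : Fin n → Fin n → Prop} {μ : Fin n ≃ Fin n}

/-- `a'` follows `a` on an alternating cycle: `a → μ a → a'` in the orientation. -/
def alternatingStep (Adj : Fin n → Fin n → Prop) (μ : Fin n ≃ Fin n) (a a' : Fin n) : Prop :=
  matchingOrientation Adj μ (.inr (μ a)) (.inl a')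

instance : Std.Irrefl (alternatingStep Adj μ) :=
  ⟨fun _ h => h.2 rfl⟩

theorem matchingOrientation_reflGen_alternatingStep {x y : Fin n ⊕ Fin n}
    (h : matchingOrientation Adj μ x y) :
    ReflGen (alternatingStep Adj μ) (Sum.elim id μ.symm x) (Sum.elim id μ.symm y) := by
  rcases x with a | b <;> rcases y with a' | b'
  · exact h.elim
  · obtain ⟨-, rfl⟩ := h
    simpa using ReflGen.refl
  · exact .single (by simpa [alternatingStep] using h)
  · exact h.elim

theorem exists_transGen_alternatingStep {x : Fin n ⊕ Fin n}
    (h : TransGen (matchingOrientation Adj μ) x x) :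
    ∃ a, TransGen (alternatingStep Adj μ) a a := by
  obtain ⟨b, hb⟩ : ∃ b, TransGen (matchingOrientation Adj μ) (.inr b) (.inr b) := by
    rcases x with a | b
    · obtain ⟨_ | b, hab, hb⟩ := h.exists_rel_and_transGen_self
      · exact hab.elim
      · exact ⟨b, hb⟩
    · exact ⟨b, h⟩
  obtain ⟨a | _, hba, hab⟩ := TransGen.head'_iff.1 hb
  swap
  · exact hba.elim
  refine ⟨μ.symm b, .head' (by simpa [alternatingStep] using hba) ?_⟩
  exact ReflTransGen.lift' (Sum.elim id μ.symm)
    (fun _ _ h => (matchingOrientation_reflGen_alternatingStep h).to_reflTransGen) _ _ hab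

theorem perm_eq_one_of_unique_matching (hμ : ∀ a, Adj a (μ a))
    (huniq : ∀ ν : Fin n ≃ Fin n, (∀ a, Adj a (ν a)) → ν = μ) {σ : Equiv.Perm (Fin n)}
    (hσ : ∀ a, σ a = a ∨ alternatingStep Adj μ a (σ a)) : σ = 1 := by
  have hν : σ.symm.trans μ = μ := huniq _ fun x => by
    obtain ⟨a, rfl⟩ := σ.surjective x
    rw [Equiv.trans_apply, σ.symm_apply_apply]
    rcases hσ a with h | h
    · rw [h]
      exact hμ a
    · exact h.1
  refine Equiv.ext fun x => ?_
  simpa using (DFunLike.congr_fun hν (σ x)).symm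

end UniqueMatching

/-- If a finite bipartite graph has a unique perfect matching μ, then the
directed graph obtained by orienting matched edges from A to B and all other
edges from B to A contains no directed cycle. -/
theorem stmt_17 {n : ℕ} (Adj : Fin n → Fin n → Prop)
    (μ : Fin n ≃ Fin n) (hμ : ∀ a, Adj a (μ a))
    (huniq : ∀ ν : Fin n ≃ Fin n, (∀ a, Adj a (ν a)) → ν = μ) :
    ¬ ∃ (k : ℕ) (v : ℕ → Fin n ⊕ Fin n), 0 < k ∧ v k = v 0 ∧
        ∀ i < k, matchingOrientation Adj μ (v i) (v (i + 1)) := by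
  rintro ⟨k, v, hk, hvk, hv⟩
  have hcycle : TransGen (matchingOrientation Adj μ) (v 0) (v 0) :=
    transGen_iff_exists_walk.2 ⟨k, v, hk, rfl, hvk, hv⟩
  obtain ⟨a, ha⟩ := exists_transGen_alternatingStep hcycle
  obtain ⟨σ, hσ1, hσ⟩ := exists_perm_ne_one_of_transGen ha
  exact hσ1 (perm_eq_one_of_unique_matching hμ huniq hσ)
end
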